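/- Let k ≥ 1, d ≥ 2, and n ≥ k(d-1)+2, and let G be a simple k-connected graph of order n and diameter d having the maximum number of edges among all simple k-connected graphs of order n and diameter d. Then G contains a subgraph T = T₁ ∨ T₂ ∨ ⋯ ∨ T_{d+1} (sequential join with T₁ = T_{d+1} = K₁ and T₂ = ⋯ = T_d = K_k) such that the set R = V(G) ∖ V(T) induces a clique in G, every vertex of R has all of its neighbors in T contained in the union of three consecutive parts T_i ∪ T_{i+1} ∪ T_{i+2}, and the union over all vertices of R of their neighborhoods in T is contained in the union of at most four consecutive parts T_i ∪ T_{i+1} ∪ T_{i+2} ∪ T_{i+3}, with each vertex of R joined to all vertices of either the first three or the last three of these consecutive parts. -/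

import Mathlib

/-!
Fix `x, y` with `dist x y = d` and sort the vertices into the distance levels `L₀ = {x}, L₁, …, L_d`
from `x`. Edges only join equal or consecutive levels, and `k`-connectivity forces every middle
level to have at least `k` vertices, since it separates `x` from `y`. Adding every edge inside a
level and between consecutive levels keeps both `k`-connectivity and the diameter, so by
maximality `G` already is this "level graph". Call a level a surplus level if it is larger than
required (`k` vertices in the middle, one at the end). Moving one vertex from a surplus level `s`
to a level `t` with `|s - t| ≥ 2` again gives a `k`-connected graph of diameter `d`, and changes
the number of edges by the number of vertices near level `t` minus that near level `s`. Applied to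
two surplus levels in both directions, this shows that all surplus levels lie in two consecutive
levels `a, a + 1`. Taking `T i` to be `L i` cut down to its required size, the remaining vertices
`R` sit in levels `a, a + 1`, which gives all the claims with `j = a - 1`.
-/

/-- A graph is `k`-connected if it has more than `k` vertices and remains connected
whenever fewer than `k` vertices are deleted. -/
def SimpleGraph.KConnected {V : Type*} [Fintype V] (k : ℕ) (G : SimpleGraph V) : Prop :=
  k < Fintype.card V ∧ ∀ S : Set V, S.ncard < k → (G.induce Sᶜ).Connected

open Finset SimpleGraph

section LevelGraph

variable {V : Type*} {f : V → ℕ}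

theorem SimpleGraph.Walk.le_add_length {G : SimpleGraph V}
    (hf : ∀ u v, G.Adj u v → f v ≤ f u + 1) {u v : V} (p : G.Walk u v) :
    f v ≤ f u + p.length := by
  induction p with
  | nil => simp
  | cons h _ ih => have := hf _ _ h; rw [Walk.length_cons]; omega

theorem SimpleGraph.Walk.exists_mem_support_eq {G : SimpleGraph V}
    (hf : ∀ u v, G.Adj u v → f v ≤ f u + 1) {u v : V} (p : G.Walk u v) {i : ℕ}
    (hu : f u ≤ i) (hv : i ≤ f v) : ∃ w ∈ p.support, f w = i := by
  induction p with
  | nil => exact ⟨_, Walk.start_mem_support _, by omega⟩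
  | cons h p ih =>
    rcases hu.eq_or_lt with rfl | hlt
    · exact ⟨_, Walk.start_mem_support _, rfl⟩
    · obtain ⟨w, hw, rfl⟩ := ih (by have := hf _ _ h; omega) hv
      exact ⟨w, by simp [hw], rfl⟩

def levelGraph (f : V → ℕ) : SimpleGraph V where
  Adj u v := u ≠ v ∧ f u ≤ f v + 1 ∧ f v ≤ f u + 1
  symm := ⟨fun _ _ h => ⟨h.1.symm, h.2.2, h.2.1⟩⟩
  loopless := ⟨fun _ h => h.1 rfl⟩

@[simp]
theorem levelGraph_adj {u v : V} :
    (levelGraph f).Adj u v ↔ u ≠ v ∧ f u ≤ f v + 1 ∧ f v ≤ f u + 1 := Iff.rfl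

instance [DecidableEq V] : DecidableRel (levelGraph f).Adj :=
  fun _ _ => inferInstanceAs (Decidable (_ ∧ _))

theorem levelGraph_exists_walk (hgap : ∀ u v i, f u < i → i < f v → ∃ w, f w = i)
    {u v : V} (huv : f u ≤ f v) :
    ∃ p : (levelGraph f).Walk u v, p.length ≤ max (f v - f u) 1 := by
  obtain ⟨m, hm⟩ : ∃ m, f v - f u = m := ⟨_, rfl⟩
  induction m generalizing u with
  | zero =>
    by_cases h : u = v
    · subst h; exact ⟨.nil, by simp⟩
    · exact ⟨(levelGraph_adj.2 ⟨h, by omega, by omega⟩).toWalk, by simp⟩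
  | succ m ih =>
    by_cases hm0 : m = 0
    · exact ⟨(levelGraph_adj.2 ⟨fun h => by subst h; omega, by omega, by omega⟩).toWalk,
        by simp⟩
    obtain ⟨w, hw⟩ := hgap u v (f u + 1) (by omega) (by omega)
    obtain ⟨p, hp⟩ := ih (u := w) (by omega) (by omega)
    have huw : (levelGraph f).Adj u w := ⟨fun h => by subst h; omega, by omega, by omega⟩
    exact ⟨.cons huw p, by rw [Walk.length_cons]; omega⟩

theorem levelGraph_connected [Nonempty V]
    (hgap : ∀ u v i, f u < i → i < f v → ∃ w, f w = i) : (levelGraph f).Connected := by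
  refine (connected_iff _).2 ⟨fun u v => ?_, ‹_›⟩
  rcases le_total (f u) (f v) with h | h
  · exact ⟨(levelGraph_exists_walk hgap h).choose⟩
  · exact ⟨(levelGraph_exists_walk hgap h).choose.reverse⟩

theorem levelGraph_diam {d : ℕ} (hd : 0 < d) (hf : ∀ v, f v ≤ d)
    (hsurj : ∀ i ≤ d, ∃ v, f v = i) : (levelGraph f).diam = d := by
  have hgap : ∀ u v i, f u < i → i < f v → ∃ w, f w = i :=
    fun u v i _ hi => hsurj i (by have := hf v; omega)
  have hedist : ∀ u v, (levelGraph f).edist u v ≤ d := by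
    intro u v
    wlog h : f u ≤ f v generalizing u v
    · rw [edist_comm]; exact this v u (by omega)
    obtain ⟨p, hp⟩ := levelGraph_exists_walk hgap h
    exact p.edist_le.trans (by have := hf v; norm_cast; omega)
  have hediam : (levelGraph f).ediam ≤ d := ediam_le_of_edist_le hedist
  obtain ⟨x, hx⟩ := hsurj 0 hd.le
  obtain ⟨y, hy⟩ := hsurj d le_rfl
  have : Nonempty V := ⟨x⟩
  obtain ⟨p, hp⟩ := (levelGraph_connected hgap).exists_walk_length_eq_dist x y
  have hxy : d ≤ (levelGraph f).dist x y := by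
    have := p.le_add_length fun _ _ h => (levelGraph_adj.1 h).2.2
    omega
  exact le_antisymm (ENat.toNat_le_of_le_natCast hediam)
    (hxy.trans (dist_le_diam (ne_top_of_le_ne_top (by simp) hediam)))

theorem levelGraph_induce (f : V → ℕ) (s : Set V) :
    (levelGraph f).induce s = levelGraph (fun v : s => f v) := by
  ext u v
  simp [Subtype.ext_iff]

theorem deleteIncidenceSet_levelGraph_update [DecidableEq V] (f : V → ℕ) (w : V) (c : ℕ) :
    (levelGraph (Function.update f w c)).deleteIncidenceSet w =
      (levelGraph f).deleteIncidenceSet w := by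
  ext u v
  simp +contextual [deleteIncidenceSet_adj, Function.update_of_ne]

variable [Fintype V]

def level (f : V → ℕ) (i : ℕ) : Finset V := {v | f v = i}

@[simp]
theorem mem_level {i : ℕ} {v : V} : v ∈ level f i ↔ f v = i := by simp [level]

theorem levelGraph_kConnected {k d : ℕ} (hk : k < Fintype.card V) (hf : ∀ v, f v ≤ d)
    (hmid : ∀ i, 0 < i → i < d → k ≤ #(level f i)) : (levelGraph f).KConnected k := by
  refine ⟨hk, fun S hS => ?_⟩
  have : Nonempty ↥Sᶜ := by
    have := Set.ncard_add_ncard_compl S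
    rw [Nat.card_eq_fintype_card] at this
    exact (Set.nonempty_of_ncard_ne_zero (by omega)).to_subtype
  rw [levelGraph_induce]
  refine levelGraph_connected fun u v i hui hiv => ?_
  obtain ⟨w, hw, hwS⟩ : ∃ w ∈ level f i, w ∉ S := by
    by_contra! h
    have : #(level f i) ≤ S.ncard := by
      rw [← Set.ncard_coe_finset]; exact Set.ncard_le_ncard h
    have := hmid i (by omega) (by have := hf v; omega)
    omega
  exact ⟨⟨w, hwS⟩, mem_level.1 hw⟩

def nearCount (f : V → ℕ) (c : ℕ) : ℕ := #{z | f z ≤ c + 1 ∧ c ≤ f z + 1}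

variable [DecidableEq V]

theorem degree_levelGraph_add_one (f : V → ℕ) (w : V) :
    (levelGraph f).degree w + 1 = nearCount f (f w) := by
  have : (levelGraph f).neighborFinset w =
      ({z | f z ≤ f w + 1 ∧ f w ≤ f z + 1} : Finset V).erase w := by
    ext z
    simp only [mem_neighborFinset, levelGraph_adj, mem_erase, mem_filter, mem_univ, true_and]
    exact ⟨fun ⟨h, h1, h2⟩ => ⟨Ne.symm h, h2, h1⟩, fun ⟨h, h1, h2⟩ => ⟨Ne.symm h, h2, h1⟩⟩
  rw [← card_neighborFinset_eq_degree, this, card_erase_add_one (by simp), nearCount]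

theorem degree_levelGraph_update {w : V} {c : ℕ} (hfar : f w + 2 ≤ c ∨ c + 2 ≤ f w) :
    (levelGraph (Function.update f w c)).degree w = nearCount f c := by
  rw [← card_neighborFinset_eq_degree, nearCount]
  congr 1
  ext z
  by_cases hz : z = w
  · subst hz
    simp only [mem_neighborFinset, SimpleGraph.irrefl, false_iff, mem_filter, mem_univ, true_and]
    omega
  · simp only [mem_neighborFinset, levelGraph_adj, Function.update_self, Function.update_of_ne hz,
      mem_filter, mem_univ, true_and]
    exact ⟨fun h => h.2.symm, fun h => ⟨Ne.symm hz, h.symm⟩⟩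

theorem ncard_edgeSet_levelGraph_update {w : V} {c : ℕ} (hfar : f w + 2 ≤ c ∨ c + 2 ≤ f w) :
    (levelGraph (Function.update f w c)).edgeSet.ncard + nearCount f (f w) =
      (levelGraph f).edgeSet.ncard + nearCount f c + 1 := by
  have ncard_eq (H : SimpleGraph V) [DecidableRel H.Adj] :
      H.edgeSet.ncard = (H.deleteIncidenceSet w).edgeSet.ncard + H.degree w := by
    rw [← coe_edgeFinset, ← coe_edgeFinset, Set.ncard_coe_finset, Set.ncard_coe_finset,
      card_edgeFinset_deleteIncidenceSet]
    have := H.degree_le_card_edgeFinset w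
    omega
  rw [ncard_eq, ncard_eq (levelGraph f), deleteIncidenceSet_levelGraph_update,
    degree_levelGraph_update hfar, ← degree_levelGraph_add_one]
  omega

end LevelGraph

section Layering

variable {V : Type*} [Fintype V] {k d : ℕ} {f : V → ℕ}

/-- The required size of level `i` of a graph of diameter `d`: the sizes of the parts of the
sequential join `K₁ ∨ K_k ∨ ⋯ ∨ K_k ∨ K₁`. -/
def quota (k d i : ℕ) : ℕ := if 0 < i ∧ i < d then k else 1

theorem one_le_quota (hk : 1 ≤ k) (d i : ℕ) : 1 ≤ quota k d i := by
  unfold quota; split_ifs <;> omega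

structure IsLayering (k d : ℕ) (f : V → ℕ) : Prop where
  le : ∀ v, f v ≤ d
  quota_le : ∀ i ≤ d, quota k d i ≤ #(level f i)

namespace IsLayering

variable (hL : IsLayering k d f)
include hL

theorem exists_eq (hk : 1 ≤ k) {i : ℕ} (hi : i ≤ d) : ∃ v, f v = i := by
  obtain ⟨v, hv⟩ := card_pos.1 ((one_le_quota hk d i).trans (hL.quota_le i hi))
  exact ⟨v, mem_level.1 hv⟩

theorem le_of_quota_lt {i : ℕ} (hi : quota k d i < #(level f i)) : i ≤ d := by
  obtain ⟨v, hv⟩ := card_pos.1 (by omega : 0 < #(level f i))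
  exact mem_level.1 hv ▸ hL.le v

theorem kConnected (hk : k < Fintype.card V) : (levelGraph f).KConnected k :=
  levelGraph_kConnected hk hL.le fun i h0 hd => by
    simpa [quota, h0, hd] using hL.quota_le i hd.le

theorem diam (hk : 1 ≤ k) (hd : 0 < d) : (levelGraph f).diam = d :=
  levelGraph_diam hd hL.le fun _ => hL.exists_eq hk

theorem update [DecidableEq V] {w : V} (hw : quota k d (f w) < #(level f (f w)))
    {c : ℕ} (hc : c ≤ d) : IsLayering k d (Function.update f w c) := by
  refine ⟨fun v => ?_, fun i hi => ?_⟩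
  · by_cases hv : v = w
    · subst hv; simpa using hc
    · simpa [Function.update_of_ne hv] using hL.le v
  · have hsub : (level f i).erase w ⊆ level (Function.update f w c) i := fun v hv => by
      obtain ⟨hvw, hv⟩ := mem_erase.1 hv
      simpa [Function.update_of_ne hvw] using hv
    have := card_le_card hsub
    by_cases hi' : i = f w
    · subst hi'
      rw [card_erase_of_mem (mem_level.2 rfl)] at this
      omega
    · rw [erase_eq_of_notMem (by simpa [eq_comm] using hi')] at this
      exact (hL.quota_le i hi).trans this

theorem level_eq_empty {i : ℕ} (hi : d < i) : level f i = ∅ :=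
  eq_empty_of_forall_notMem fun v hv => by have := hL.le v; rw [mem_level] at hv; omega

theorem exists_parts :
    ∃ T : ℕ → Finset V, (∀ i, T i ⊆ level f i) ∧ ∀ i ≤ d, #(T i) = quota k d i := by
  choose T hT using fun i => exists_subset_card_eq (s := level f i)
    (n := if i ≤ d then quota k d i else 0)
    (by split_ifs with h; exacts [hL.quota_le i h, Nat.zero_le _])
  exact ⟨T, fun i => (hT i).1, fun i hi => by simpa [hi] using (hT i).2⟩

theorem quota_lt_of_notMem {T : ℕ → Finset V} (hT : ∀ i, T i ⊆ level f i)
    (hTcard : ∀ i ≤ d, #(T i) = quota k d i) {r : V} (hr : r ∉ T (f r)) :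
    quota k d (f r) < #(level f (f r)) := by
  by_contra! h
  refine hr ((eq_of_subset_of_card_le (hT _) ?_) ▸ mem_level.2 rfl)
  rwa [hTcard _ (hL.le r)]

theorem mem_biUnion_parts_iff [DecidableEq V] {T : ℕ → Finset V} (hT : ∀ i, T i ⊆ level f i)
    {v : V} :
    v ∈ (range (d + 1)).biUnion T ↔ v ∈ T (f v) := by
  simp only [mem_biUnion, mem_range]
  refine ⟨fun ⟨i, _, hv⟩ => ?_, fun hv => ⟨_, Nat.lt_succ_of_le (hL.le v), hv⟩⟩
  rwa [mem_level.1 (hT i hv)]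

section Maximal

variable [DecidableEq V] (hk : 1 ≤ k) (hkV : k < Fintype.card V) (hd : 0 < d)
  (hmax : ∀ H : SimpleGraph V, H.KConnected k → H.diam = d →
    H.edgeSet.ncard ≤ (levelGraph f).edgeSet.ncard)
include hk hkV hd hmax

/-- Moving a vertex from the surplus level `s` to level `t` must not gain edges. -/
theorem nearCount_lt {s t : ℕ} (hs : quota k d s < #(level f s)) (ht : t ≤ d)
    (hfar : s + 2 ≤ t ∨ t + 2 ≤ s) : nearCount f t < nearCount f s := by
  obtain ⟨w, hw⟩ := card_pos.1 (by omega : 0 < #(level f s))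
  obtain rfl := mem_level.1 hw
  have hL' := hL.update hs ht
  have := hmax _ (hL'.kConnected hkV) (hL'.diam hk hd)
  have := ncard_edgeSet_levelGraph_update hfar
  omega

theorem le_succ_of_quota_lt {s t : ℕ} (hs : quota k d s < #(level f s))
    (ht : quota k d t < #(level f t)) : s ≤ t + 1 := by
  by_contra! h
  have := hL.nearCount_lt hk hkV hd hmax hs (hL.le_of_quota_lt ht) (by omega)
  have := hL.nearCount_lt hk hkV hd hmax ht (hL.le_of_quota_lt hs) (by omega)
  omega

end Maximal

end IsLayering

end Layering

theorem exists_pos_forall_eq_or_eq_succ {P : ℕ → Prop} (h0 : ¬ P 0)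
    (hP : ∀ i j, P i → P j → i ≤ j + 1) : ∃ a, 0 < a ∧ ∀ i, P i → i = a ∨ i = a + 1 := by
  classical
  by_cases h : ∃ i, P i
  · refine ⟨Nat.find h, Nat.pos_of_ne_zero fun h' => h0 (h' ▸ Nat.find_spec h), fun i hi => ?_⟩
    have := Nat.find_min' h hi
    have := hP i _ hi (Nat.find_spec h)
    omega
  · exact ⟨1, one_pos, fun i hi => (h ⟨i, hi⟩).elim⟩

section Consecutive

variable {α : Type*} [DecidableEq α] {T : ℕ → Finset α} {i j : ℕ} {x : α}

theorem mem_union_three_of_mem (hx : x ∈ T i) (hj : j ≤ i) (hi : i ≤ j + 2) :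
    x ∈ T j ∪ T (j + 1) ∪ T (j + 2) := by
  rcases (by omega : i = j ∨ i = j + 1 ∨ i = j + 2) with rfl | rfl | rfl <;> simp [hx]

theorem mem_union_four_of_mem (hx : x ∈ T i) (hj : j ≤ i) (hi : i ≤ j + 3) :
    x ∈ T j ∪ T (j + 1) ∪ T (j + 2) ∪ T (j + 3) := by
  rcases (by omega : i = j ∨ i = j + 1 ∨ i = j + 2 ∨ i = j + 3) with rfl | rfl | rfl | rfl <;>
    simp [hx]

theorem exists_of_mem_union_three (hx : x ∈ T j ∪ T (j + 1) ∪ T (j + 2)) :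
    ∃ i, j ≤ i ∧ i ≤ j + 2 ∧ x ∈ T i := by
  simp only [mem_union] at hx
  rcases hx with (hx | hx) | hx <;> exact ⟨_, by omega, by omega, hx⟩

end Consecutive

namespace SimpleGraph

variable {V : Type*} {G : SimpleGraph V}

theorem Adj.dist_le_dist_add_one {u v : V} (h : G.Adj u v) (x : V) :
    G.dist x v ≤ G.dist x u + 1 := by
  simpa [dist_eq_one_iff_adj.2 h] using h.reachable.dist_triangle_right x

theorem le_levelGraph_dist (x : V) : G ≤ levelGraph (G.dist x) := fun _ _ h =>
  ⟨h.ne, h.symm.dist_le_dist_add_one x, h.dist_le_dist_add_one x⟩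

theorem eq_of_le_of_ncard_edgeSet_le [Finite V] {H : SimpleGraph V} (hle : G ≤ H)
    (h : H.edgeSet.ncard ≤ G.edgeSet.ncard) : G = H :=
  edgeSet_injective (Set.eq_of_subset_of_ncard_le (edgeSet_mono hle) h)

variable [Fintype V] {k d : ℕ}

theorem KConnected.connected (hk : 1 ≤ k) (hG : G.KConnected k) : G.Connected := by
  have := hG.2 ∅ (by rw [Set.ncard_empty]; omega)
  rw [Set.compl_empty] at this
  exact G.induceUnivIso.connected_iff.1 this

theorem Connected.card_level_dist_zero (hG : G.Connected) (x : V) :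
    #(level (G.dist x) 0) = 1 :=
  card_eq_one.2 ⟨x, by ext v; simp [hG.dist_eq_zero_iff, eq_comm]⟩

theorem KConnected.isLayering_dist (hk : 1 ≤ k) (hG : G.KConnected k) {x y : V}
    (hxy : G.dist x y = G.diam) : IsLayering k G.diam (G.dist x) where
  le _ :=
    have := (hG.connected hk).nonempty
    dist_le_diam (connected_iff_ediam_ne_top.1 (hG.connected hk))
  quota_le i hi := by
    unfold quota
    split_ifs with hmid
    · -- a middle level separates `x` from `y`
      by_contra! hlt
      set S : Set V := ↑(level (G.dist x) i)
      have hS : (G.induce Sᶜ).Connected := hG.2 S (by rwa [Set.ncard_coe_finset])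
      have hout (v : V) (hv : G.dist x v ≠ i) : v ∈ Sᶜ := fun h => hv (mem_level.1 h)
      obtain ⟨p⟩ := hS.preconnected ⟨x, hout x (by rw [dist_self]; omega)⟩ ⟨y, hout y (by omega)⟩
      obtain ⟨w, -, hw⟩ := p.exists_mem_support_eq (f := fun v : ↥Sᶜ => G.dist x v)
        (fun _ _ h => Adj.dist_le_dist_add_one (G := G) h x) (i := i) (by simp)
        (by dsimp only; omega)
      exact w.2 (by simpa [S] using hw)
    · rcases (by omega : i = 0 ∨ i = G.diam) with rfl | rfl
      · exact card_pos.2 ⟨x, by simp⟩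
      · exact card_pos.2 ⟨y, by simp [hxy]⟩

theorem KConnected.exists_eq_levelGraph_of_maximal [DecidableEq V] (hk : 1 ≤ k) (hd : 0 < d)
    (hG : G.KConnected k) (hdiam : G.diam = d)
    (hmax : ∀ H : SimpleGraph V, H.KConnected k → H.diam = d →
      H.edgeSet.ncard ≤ G.edgeSet.ncard) :
    ∃ f : V → ℕ, G = levelGraph f ∧ IsLayering k d f ∧
      ∃ a, 0 < a ∧ ∀ i, quota k d i < #(level f i) → i = a ∨ i = a + 1 := by
  have hconn := hG.connected hk
  have := hconn.nonempty
  obtain ⟨x, y, hxy⟩ := G.exists_dist_eq_diam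
  have hL : IsLayering k d (G.dist x) := hdiam ▸ hG.isLayering_dist hk hxy
  have hGf : G = levelGraph (G.dist x) := eq_of_le_of_ncard_edgeSet_le (le_levelGraph_dist x)
    (hmax _ (hL.kConnected hG.1) (hL.diam hk hd))
  refine ⟨G.dist x, hGf, hL, exists_pos_forall_eq_or_eq_succ ?_ fun i j =>
    hL.le_succ_of_quota_lt hk hG.1 hd (hGf ▸ hmax)⟩
  simp [quota, hconn.card_level_dist_zero x]

end SimpleGraph

theorem extremal_structure_general (k d n : ℕ) {V : Type} [Fintype V] [DecidableEq V]
    (G : SimpleGraph V) (hk : 1 ≤ k) (hd : 2 ≤ d)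
    (hG : G.KConnected k) (hcard : Fintype.card V = n) (hdiam : G.diam = d)
    (hmax : ∀ (W : Type) [Fintype W] (H : SimpleGraph W),
      H.KConnected k → Fintype.card W = n → H.diam = d →
      H.edgeSet.ncard ≤ G.edgeSet.ncard) :
    ∃ T : ℕ → Finset V,
      -- the parts have the right sizes: `T 0` and `T d` are single vertices, the middle
      -- parts `T 1, …, T (d-1)` have `k` vertices each, and there are no further parts
      (T 0).card = 1 ∧ (T d).card = 1 ∧ (∀ i : ℕ, 0 < i → i < d → (T i).card = k) ∧
      (∀ i : ℕ, d < i → T i = ∅) ∧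
      (∀ i j : ℕ, i ≠ j → Disjoint (T i) (T j)) ∧
      -- the sequential join of the parts is a subgraph of `G`:
      -- each part is a clique and consecutive parts are completely joined
      (∀ i : ℕ, ∀ u ∈ T i, ∀ v ∈ T i, u ≠ v → G.Adj u v) ∧
      (∀ i : ℕ, i < d → ∀ u ∈ T i, ∀ v ∈ T (i + 1), G.Adj u v) ∧
      -- with `R` the set of vertices outside `T`:
      (let tVerts : Finset V := (Finset.range (d + 1)).biUnion T
       let R : Finset V := tVertsᶜ
       -- `R` induces a clique
       (∀ u ∈ R, ∀ v ∈ R, u ≠ v → G.Adj u v) ∧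
       -- each vertex of `R` has all its neighbors in `T` inside three consecutive parts
       (∀ r ∈ R, ∃ i : ℕ, ∀ v ∈ tVerts, G.Adj r v → v ∈ T i ∪ T (i + 1) ∪ T (i + 2)) ∧
       -- all neighborhoods in `T` of vertices of `R` lie in four consecutive parts, and
       -- each vertex of `R` is joined to all of the first three or all of the last three
       (∃ j : ℕ,
         (∀ r ∈ R, ∀ v ∈ tVerts, G.Adj r v →
            v ∈ T j ∪ T (j + 1) ∪ T (j + 2) ∪ T (j + 3)) ∧
         (∀ r ∈ R,
            (∀ v ∈ T j ∪ T (j + 1) ∪ T (j + 2), G.Adj r v) ∨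
            (∀ v ∈ T (j + 1) ∪ T (j + 2) ∪ T (j + 3), G.Adj r v)))) := by
  obtain ⟨f, rfl, hL, a, ha, hsurplus⟩ := hG.exists_eq_levelGraph_of_maximal hk (by omega) hdiam
    fun H hH hHd => hmax V H hH hcard hHd
  obtain ⟨T, hT, hTcard⟩ := hL.exists_parts
  have hmemT {i v} (hv : v ∈ T i) : f v = i := mem_level.1 (hT i hv)
  have hR {r} (hr : r ∉ T (f r)) : f r = a ∨ f r = a + 1 :=
    hsurplus _ (hL.quota_lt_of_notMem hT hTcard hr)
  refine ⟨T, by simp [hTcard, quota], by simp [hTcard, quota],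
    fun i h0 hi => by simp [hTcard i hi.le, quota, h0, hi],
    fun i hi => subset_empty.1 (hL.level_eq_empty hi ▸ hT i),
    fun i j hij => disjoint_left.2 fun v hi hj => hij ((hmemT hi).symm.trans (hmemT hj)),
    fun i u hu v hv huv => by simp [huv, hmemT hu, hmemT hv],
    fun i _ u hu v hv => ?_, ?_⟩
  · have := hmemT hu; have := hmemT hv
    exact ⟨fun h => by have := hmemT (h ▸ hu); omega, by omega, by omega⟩
  intro tVerts R
  simp only [R, tVerts, mem_compl, hL.mem_biUnion_parts_iff hT]
  refine ⟨fun u hu v hv huv => ?_, fun r hr => ⟨f r - 1, fun v hv hrv => ?_⟩,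
    a - 1, fun r hr v hv hrv => ?_, fun r hr => ?_⟩
  · have := hR hu; have := hR hv
    exact ⟨huv, by omega, by omega⟩
  · have := hR hr; have := (levelGraph_adj.1 hrv).2
    exact mem_union_three_of_mem hv (by omega) (by omega)
  · have := hR hr; have := (levelGraph_adj.1 hrv).2
    exact mem_union_four_of_mem hv (by omega) (by omega)
  · have hall (j : ℕ) (hj : j + 1 = f r) :
        ∀ v ∈ T j ∪ T (j + 1) ∪ T (j + 2), (levelGraph f).Adj r v := fun v hv => by
      obtain ⟨i, hi₁, hi₂, hv⟩ := exists_of_mem_union_three hv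
      have := hmemT hv
      exact ⟨by rintro rfl; exact hr (this ▸ hv), by omega, by omega⟩
    rcases hR hr with h | h
    · exact .inl (hall _ (by omega))
    · exact .inr (hall _ (by omega))

/-- Structure of the extremal graphs in Ore's theorem.  Let `G` be a simple `k`-connected
graph of order `n` and diameter `d` with the maximum number of edges.  Then `G` contains a
subgraph `T = T₁ ∨ T₂ ∨ ⋯ ∨ T_{d+1}` (a sequential join with `T₁ = T_{d+1} = K₁` and
`T₂ = ⋯ = T_d = K_k`, here given by parts `T 0, T 1, …, T d`, each part a clique and
consecutive parts completely joined) such that the set `R` of vertices outside `T` induces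
a clique, every vertex of `R` has all of its neighbors in `T` inside three consecutive
parts, and the neighborhoods in `T` of all vertices of `R` together lie in at most four
consecutive parts `T j ∪ T (j+1) ∪ T (j+2) ∪ T (j+3)`, with every vertex of `R` joined to
all vertices of either the first three or the last three of these parts. -/
theorem extremal_structure (k d n : ℕ) {V : Type} [Fintype V] [DecidableEq V]
    (G : SimpleGraph V) (hk : 1 ≤ k) (hd : 2 ≤ d) (hn : k * (d - 1) + 2 ≤ n)
    (hG : G.KConnected k) (hcard : Fintype.card V = n) (hdiam : G.diam = d)
    (hmax : ∀ (W : Type) [Fintype W] (H : SimpleGraph W),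
      H.KConnected k → Fintype.card W = n → H.diam = d →
      H.edgeSet.ncard ≤ G.edgeSet.ncard) :
    ∃ T : ℕ → Finset V,
      -- the parts have the right sizes: `T 0` and `T d` are single vertices, the middle
      -- parts `T 1, …, T (d-1)` have `k` vertices each, and there are no further parts
      (T 0).card = 1 ∧ (T d).card = 1 ∧ (∀ i : ℕ, 0 < i → i < d → (T i).card = k) ∧
      (∀ i : ℕ, d < i → T i = ∅) ∧
      (∀ i j : ℕ, i ≠ j → Disjoint (T i) (T j)) ∧
      -- the sequential join of the parts is a subgraph of `G`:
      -- each part is a clique and consecutive parts are completely joined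
      (∀ i : ℕ, ∀ u ∈ T i, ∀ v ∈ T i, u ≠ v → G.Adj u v) ∧
      (∀ i : ℕ, i < d → ∀ u ∈ T i, ∀ v ∈ T (i + 1), G.Adj u v) ∧
      -- with `R` the set of vertices outside `T`:
      (let tVerts : Finset V := (Finset.range (d + 1)).biUnion T
       let R : Finset V := tVertsᶜ
       -- `R` induces a clique
       (∀ u ∈ R, ∀ v ∈ R, u ≠ v → G.Adj u v) ∧
       -- each vertex of `R` has all its neighbors in `T` inside three consecutive parts
       (∀ r ∈ R, ∃ i : ℕ, ∀ v ∈ tVerts, G.Adj r v → v ∈ T i ∪ T (i + 1) ∪ T (i + 2)) ∧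
       -- all neighborhoods in `T` of vertices of `R` lie in four consecutive parts, and
       -- each vertex of `R` is joined to all of the first three or all of the last three
       (∃ j : ℕ,
         (∀ r ∈ R, ∀ v ∈ tVerts, G.Adj r v →
            v ∈ T j ∪ T (j + 1) ∪ T (j + 2) ∪ T (j + 3)) ∧
         (∀ r ∈ R,
            (∀ v ∈ T j ∪ T (j + 1) ∪ T (j + 2), G.Adj r v) ∨
            (∀ v ∈ T (j + 1) ∪ T (j + 2) ∪ T (j + 3), G.Adj r v)))) :=
  extremal_structure_general k d n G hk hd hG hcard hdiam hmax
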